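/- arXiv:2111.00832 — 8 statements merged into one kernel-verified Lean document; each statement's English description precedes it below -/
import Mathlib

section
/- Let f: ℕ₊ → (0,∞) and let (T_k)_{k≥1} be independent random variables with T_k exponentially distributed with rate f(k). Then for every λ > 0, with S_l = T_1 + ⋯ + T_l, one has the identity (in [0,∞]) 𝔼[(Σ_{l=1}^{∞} e^{−λ S_l})²] = Σ_{l=1}^{∞} ∏_{i=1}^{l} f(i)/(2λ + f(i)) + 2 Σ_{k=1}^{∞} Σ_{l=k+1}^{∞} ∏_{i=1}^{k} f(i)/(2λ + f(i)) · ∏_{i=k+1}^{l} f(i)/(λ + f(i)). -/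
/-!
Expanding the square turns the left side into `∑ₖ ∑ₗ 𝔼[e^{-λ S_k} e^{-λ S_l}]`. For `k ≤ l`
the exponent is `-(2λ ∑_{i ≤ k} T_i + λ ∑_{k < i ≤ l} T_i)`, so by independence the
expectation factors into the Laplace transforms `𝔼[e^{-c T_i}] = f(i) / (c + f(i))` of the
exponential laws. The double sum is symmetric in `(k, l)`, hence equals its diagonal plus
twice its strictly upper part.
-/

open MeasureTheory ProbabilityTheory Real Set
open scoped ENNReal

lemma Finset.Icc_union_Ioc_eq_Icc {α : Type*} [LinearOrder α] [LocallyFiniteOrder α] {a b c : α}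
    (hab : a ≤ b) (hbc : b ≤ c) : Finset.Icc a b ∪ Finset.Ioc b c = Finset.Icc a c := by
  rw [← Finset.coe_inj, Finset.coe_union, Finset.coe_Icc, Finset.coe_Ioc, Finset.coe_Icc,
    Set.Icc_union_Ioc_eq_Icc hab hbc]

lemma Finset.disjoint_Icc_Ioc {α : Type*} [Preorder α] [LocallyFiniteOrder α] (a b c : α) :
    Disjoint (Finset.Icc a b) (Finset.Ioc b c) :=
  Finset.disjoint_left.2 fun _ hab hbc => (Finset.mem_Icc.1 hab).2.not_gt (Finset.mem_Ioc.1 hbc).1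

lemma ENNReal.tsum_tsum_eq_tsum_diag_add_two_mul {α : Type*} [LinearOrder α]
    (E : α → α → ℝ≥0∞) (hE : ∀ k l, E k l = E l k) :
    ∑' k, ∑' l, E k l = ∑' k, E k k + 2 * ∑' k, ∑' l : {l // k < l}, E k l := by
  have hsplit : ∀ k l, E k l = ((if l < k then E k l else 0) + if l = k then E k l else 0)
      + if k < l then E k l else 0 := fun k l => by
    rcases lt_trichotomy l k with h | rfl | h
    · simp [h, h.ne, h.not_gt]
    · simp
    · simp [h, h.ne', h.not_gt]
  have hlower : ∑' k, ∑' l, (if l < k then E k l else 0)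
      = ∑' k, ∑' l, if k < l then E k l else 0 := by
    rw [ENNReal.tsum_comm]
    exact tsum_congr fun k => tsum_congr fun l => by rw [hE]
  have hdiag : ∀ k, ∑' l, (if l = k then E k l else 0) = E k k := fun k => tsum_ite_eq k (E k)
  have hupper : ∀ k, ∑' l : {l // k < l}, E k l = ∑' l, if k < l then E k l else 0 := fun k =>
    (tsum_subtype {l | k < l} (E k)).trans (tsum_congr fun l => by simp [Set.indicator_apply])
  calc ∑' k, ∑' l, E k l
      = ∑' k, ∑' l, (((if l < k then E k l else 0) + if l = k then E k l else 0)
          + if k < l then E k l else 0) := tsum_congr fun k => tsum_congr fun l => hsplit k l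
    _ = (∑' k, ∑' l, (if l < k then E k l else 0)) + ∑' k, E k k
          + ∑' k, ∑' l, if k < l then E k l else 0 := by simp only [ENNReal.tsum_add, hdiag]
    _ = ∑' k, E k k + 2 * ∑' k, ∑' l : {l // k < l}, E k l := by
      rw [hlower, two_mul]; simp only [hupper]; ring

lemma lintegral_sq_tsum {α ι : Type*} [MeasurableSpace α] {μ : Measure α} [Countable ι]
    {g : ι → α → ℝ≥0∞} (hg : ∀ i, AEMeasurable (g i) μ) :
    ∫⁻ a, (∑' i, g i a) ^ 2 ∂μ = ∑' i, ∑' j, ∫⁻ a, g i a * g j a ∂μ := by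
  have hexpand : ∀ a, (∑' i, g i a) ^ 2 = ∑' i, ∑' j, g i a * g j a := fun a => by
    rw [sq, ← ENNReal.tsum_mul_right]
    exact tsum_congr fun i => ENNReal.tsum_mul_left.symm
  have hprod : ∀ i j, AEMeasurable (fun a => g i a * g j a) μ := fun i j => (hg i).mul (hg j)
  rw [lintegral_congr hexpand, lintegral_tsum fun i => AEMeasurable.tsum (hprod i)]
  exact tsum_congr fun i => lintegral_tsum (hprod i)

lemma lintegral_exp_neg_mul_expMeasure {r c : ℝ} (hcr : 0 < c + r) :
    ∫⁻ x, ENNReal.ofReal (exp (-(c * x))) ∂expMeasure r = ENNReal.ofReal (r / (c + r)) := by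
  have hdensity : ∀ x, exponentialPDF r x * ENNReal.ofReal (exp (-(c * x)))
      = (Ici 0).indicator
          (fun x => ENNReal.ofReal r * ENNReal.ofReal (exp (-(c + r) * x))) x := by
    intro x
    rcases lt_or_ge x 0 with hx | hx
    · simp [exponentialPDF_of_neg hx, hx]
    · rw [indicator_of_mem (mem_Ici.2 hx), exponentialPDF_of_nonneg hx,
        ENNReal.ofReal_mul' (exp_nonneg _), mul_assoc, ← ENNReal.ofReal_mul (exp_nonneg _),
        ← exp_add]
      ring_nf
  have hexp : ∫⁻ x in Ioi 0, ENNReal.ofReal (exp (-(c + r) * x))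
      = ENNReal.ofReal (c + r)⁻¹ := by
    rw [← ofReal_integral_eq_lintegral_ofReal (exp_neg_integrableOn_Ioi 0 hcr)
      (ae_of_all _ fun _ => exp_nonneg _), integral_exp_mul_Ioi (by linarith), mul_zero,
      exp_zero, neg_div_neg_eq, one_div]
  have hpdf : Measurable (exponentialPDF r) := (measurable_exponentialPDFReal r).ennreal_ofReal
  change ∫⁻ x, _ ∂volume.withDensity (exponentialPDF r) = _
  rw [lintegral_withDensity_eq_lintegral_mul _ hpdf (by fun_prop)]
  simp only [Pi.mul_apply, hdensity]
  rw [lintegral_indicator measurableSet_Ici, ← restrict_Ioi_eq_restrict_Ici,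
    lintegral_const_mul _ (by fun_prop), hexp, ← ENNReal.ofReal_mul' (by positivity),
    div_eq_mul_inv]

section IndependentExponentials

variable {ι Ω : Type*} [MeasurableSpace Ω] {P : Measure Ω} {f : ι → ℝ} {T : ι → Ω → ℝ}

lemma lintegral_exp_neg_mul_of_map_eq_expMeasure {X : Ω → ℝ} (hX : Measurable X) {r c : ℝ}
    (hlaw : P.map X = expMeasure r) (hcr : 0 < c + r) :
    ∫⁻ ω, ENNReal.ofReal (exp (-(c * X ω))) ∂P = ENNReal.ofReal (r / (c + r)) := by
  rw [← lintegral_map (f := fun x => ENNReal.ofReal (exp (-(c * x)))) (by fun_prop) hX, hlaw,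
    lintegral_exp_neg_mul_expMeasure hcr]

lemma lintegral_exp_neg_sum_of_iIndepFun (hmeas : ∀ i, Measurable (T i))
    (hindep : iIndepFun T P) (hlaw : ∀ i, P.map (T i) = expMeasure (f i)) (c : ι → ℝ)
    (s : Finset ι) (hc : ∀ i ∈ s, 0 < c i + f i) :
    ∫⁻ ω, ENNReal.ofReal (exp (-∑ i ∈ s, c i * T i ω)) ∂P
      = ∏ i ∈ s, ENNReal.ofReal (f i / (c i + f i)) := by
  have hfactor : ∀ ω, ENNReal.ofReal (exp (-∑ i ∈ s, c i * T i ω))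
      = ∏ i ∈ s, ENNReal.ofReal (exp (-(c i * T i ω))) := fun ω => by
    rw [← ENNReal.ofReal_prod_of_nonneg fun _ _ => exp_nonneg _, ← exp_sum,
      Finset.sum_neg_distrib]
  have hindep' : iIndepFun (fun i ω => ENNReal.ofReal (exp (-(c i * T i ω)))) P :=
    hindep.comp (fun i x => ENNReal.ofReal (exp (-(c i * x)))) fun i => by fun_prop
  rw [lintegral_congr hfactor, lintegral_prod_eq_prod_lintegral_of_indepFun s _ hindep'
    fun i => by fun_prop]
  exact Finset.prod_congr rfl fun i hi =>
    lintegral_exp_neg_mul_of_map_eq_expMeasure (hmeas i) (hlaw i) (hc i hi)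

lemma lintegral_exp_sum_mul_exp_sum_union [DecidableEq ι] (hmeas : ∀ i, Measurable (T i))
    (hindep : iIndepFun T P) (hlaw : ∀ i, P.map (T i) = expMeasure (f i)) (hf : ∀ i, 0 < f i)
    {lam : ℝ} (hlam : 0 ≤ lam) {s t : Finset ι} (hst : Disjoint s t) :
    ∫⁻ ω, ENNReal.ofReal (exp (-lam * ∑ i ∈ s, T i ω))
        * ENNReal.ofReal (exp (-lam * ∑ i ∈ s ∪ t, T i ω)) ∂P
      = (∏ i ∈ s, ENNReal.ofReal (f i / (2 * lam + f i)))
        * ∏ i ∈ t, ENNReal.ofReal (f i / (lam + f i)) := by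
  set c : ι → ℝ := fun i => if i ∈ s then 2 * lam else lam
  have hc_s : ∀ i ∈ s, c i = 2 * lam := fun i hi => if_pos hi
  have hc_t : ∀ i ∈ t, c i = lam := fun i hi => if_neg (Finset.disjoint_right.1 hst hi)
  have hexponent : ∀ ω, ENNReal.ofReal (exp (-lam * ∑ i ∈ s, T i ω))
        * ENNReal.ofReal (exp (-lam * ∑ i ∈ s ∪ t, T i ω))
      = ENNReal.ofReal (exp (-∑ i ∈ s ∪ t, c i * T i ω)) := fun ω => by
    have hsum_s : ∑ i ∈ s, c i * T i ω = 2 * lam * ∑ i ∈ s, T i ω := by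
      rw [Finset.mul_sum]; exact Finset.sum_congr rfl fun i hi => by rw [hc_s i hi]
    have hsum_t : ∑ i ∈ t, c i * T i ω = lam * ∑ i ∈ t, T i ω := by
      rw [Finset.mul_sum]; exact Finset.sum_congr rfl fun i hi => by rw [hc_t i hi]
    rw [← ENNReal.ofReal_mul (exp_nonneg _), ← exp_add, Finset.sum_union hst,
      Finset.sum_union hst, hsum_s, hsum_t]
    ring_nf
  have hc : ∀ i ∈ s ∪ t, 0 < c i + f i := fun i _ => by
    have := hf i
    simp only [c]; split_ifs <;> linarith
  rw [lintegral_congr hexponent, lintegral_exp_neg_sum_of_iIndepFun hmeas hindep hlaw c _ hc,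
    Finset.prod_union hst]
  congr 1
  · exact Finset.prod_congr rfl fun i hi => by rw [hc_s i hi]
  · exact Finset.prod_congr rfl fun i hi => by rw [hc_t i hi]

end IndependentExponentials

theorem stmt_2_general {Ω : Type*} [MeasurableSpace Ω] (P : Measure Ω)
    (f : ℕ+ → ℝ) (hf : ∀ k, 0 < f k)
    (T : ℕ+ → Ω → ℝ) (hmeas : ∀ k, Measurable (T k))
    (hindep : iIndepFun T P)
    (hlaw : ∀ k, Measure.map (T k) P = expMeasure (f k))
    (lam : ℝ) (hlam : 0 < lam) :
    ∫⁻ ω, (∑' l : ℕ+, ENNReal.ofReal (Real.exp (-lam * ∑ i ∈ Finset.Icc 1 l, T i ω))) ^ 2 ∂P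
      = (∑' l : ℕ+, ∏ i ∈ Finset.Icc 1 l, ENNReal.ofReal (f i / (2 * lam + f i)))
        + 2 * ∑' k : ℕ+, ∑' l : {l : ℕ+ // k < l},
            (∏ i ∈ Finset.Icc 1 k, ENNReal.ofReal (f i / (2 * lam + f i)))
              * ∏ i ∈ Finset.Icc (k + 1) (l : ℕ+), ENNReal.ofReal (f i / (lam + f i)) := by
  have hpair : ∀ k l : ℕ+, k ≤ l →
      ∫⁻ ω, ENNReal.ofReal (exp (-lam * ∑ i ∈ Finset.Icc 1 k, T i ω))
        * ENNReal.ofReal (exp (-lam * ∑ i ∈ Finset.Icc 1 l, T i ω)) ∂P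
      = (∏ i ∈ Finset.Icc 1 k, ENNReal.ofReal (f i / (2 * lam + f i)))
        * ∏ i ∈ Finset.Ioc k l, ENNReal.ofReal (f i / (lam + f i)) := fun k l hkl => by
    rw [← Finset.Icc_union_Ioc_eq_Icc one_le hkl]
    exact lintegral_exp_sum_mul_exp_sum_union hmeas hindep hlaw hf hlam.le
      (Finset.disjoint_Icc_Ioc 1 k l)
  rw [lintegral_sq_tsum fun l => by fun_prop,
    ENNReal.tsum_tsum_eq_tsum_diag_add_two_mul _ fun k l => by simp only [mul_comm]]
  congr 1
  · exact tsum_congr fun l => by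
      rw [hpair l l le_rfl, Finset.Ioc_self, Finset.prod_empty, mul_one]
  · congr 1
    exact tsum_congr fun k => tsum_congr fun l => by
      rw [hpair k l l.2.le, Finset.Icc_add_one_left_eq_Ioc]

/-- If `(T k)_{k ≥ 1}` are independent with `T k` exponentially distributed
with rate `f k > 0`, then for every `λ > 0`, with `S l = T 1 + ⋯ + T l`, one has the
identity in `[0,∞]`:
`𝔼[(Σ_{l=1}^∞ e^{−λ S_l})²] = Σ_{l=1}^∞ ∏_{i=1}^l f(i)/(2λ + f(i))
  + 2 Σ_{k=1}^∞ Σ_{l=k+1}^∞ ∏_{i=1}^k f(i)/(2λ + f(i)) · ∏_{i=k+1}^l f(i)/(λ + f(i))`. -/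
theorem stmt_2 {Ω : Type*} [MeasurableSpace Ω] (P : Measure Ω) [IsProbabilityMeasure P]
    (f : ℕ+ → ℝ) (hf : ∀ k, 0 < f k)
    (T : ℕ+ → Ω → ℝ) (hmeas : ∀ k, Measurable (T k))
    (hindep : iIndepFun T P)
    (hlaw : ∀ k, Measure.map (T k) P = expMeasure (f k))
    (lam : ℝ) (hlam : 0 < lam) :
    ∫⁻ ω, (∑' l : ℕ+, ENNReal.ofReal (Real.exp (-lam * ∑ i ∈ Finset.Icc 1 l, T i ω))) ^ 2 ∂P
      = (∑' l : ℕ+, ∏ i ∈ Finset.Icc 1 l, ENNReal.ofReal (f i / (2 * lam + f i)))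
        + 2 * ∑' k : ℕ+, ∑' l : {l : ℕ+ // k < l},
            (∏ i ∈ Finset.Icc 1 k, ENNReal.ofReal (f i / (2 * lam + f i)))
              * ∏ i ∈ Finset.Icc (k + 1) (l : ℕ+), ENNReal.ofReal (f i / (lam + f i)) :=
  stmt_2_general P f hf T hmeas hindep hlaw lam hlam
end

section
/- Let f: ℕ₊ → (0,∞) satisfy f(k) ≤ C k^β for all k ∈ ℕ₊, for some constants C > 0 and β < 1. Then for every λ > 0 the series ρ_f(λ) = Σ_{l=1}^{∞} ∏_{i=1}^{l} f(i)/(λ + f(i)) converges (is finite). -/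
/-!
Bound every factor with `i ≤ l` by `1 - λ/(λ + C l^γ) ≤ exp(-λ/(λ + C l^γ))`, where
`γ = max β 0`. The product up to `l` is then at most `exp(-c l^(1-γ))` with
`c = λ/(λ + C)`, a stretched exponential, which is summable since `1 - γ > 0`.
-/

open Real Filter Finset

lemma summable_exp_neg_mul_rpow {c ε : ℝ} (hc : 0 < c) (hε : 0 < ε) :
    Summable fun n : ℕ => exp (-(c * (n : ℝ) ^ ε)) := by
  have hlo := (isLittleO_exp_neg_mul_rpow_atTop hc (-2 / ε)).comp_tendsto
    ((tendsto_rpow_atTop hε).comp tendsto_natCast_atTop_atTop)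
  -- `exp (-c t) = o(t ^ (-2/ε))` at `t = n ^ ε` compares the terms with `n ^ (-2)`.
  refine summable_of_isBigO_nat (Real.summable_nat_rpow.mpr (by norm_num : (-2 : ℝ) < -1)) ?_
  refine hlo.isBigO.congr' (Eventually.of_forall fun n => by simp [neg_mul]) ?_
  filter_upwards with n
  simp only [Function.comp_apply]
  rw [← rpow_mul n.cast_nonneg, mul_div_cancel₀ _ hε.ne']

lemma div_add_le_exp_neg {a M lam : ℝ} (ha : 0 ≤ a) (haM : a ≤ M) (hlam : 0 < lam) :
    a / (lam + a) ≤ exp (-(lam / (lam + M))) := by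
  have hlamM : lam + M ≠ 0 := by linarith
  calc a / (lam + a) ≤ M / (lam + M) := by
        rw [div_le_div_iff₀ (by linarith) (by linarith)]; nlinarith
    _ = -(lam / (lam + M)) + 1 := by field_simp; ring
    _ ≤ exp (-(lam / (lam + M))) := add_one_le_exp _

lemma prod_Icc_div_add_le_exp {f : ℕ+ → ℝ} (hf : ∀ k, 0 ≤ f k) {lam M : ℝ} (hlam : 0 < lam)
    {l : ℕ+} (hM : ∀ i ∈ Icc 1 l, f i ≤ M) :
    ∏ i ∈ Icc 1 l, f i / (lam + f i) ≤ exp (-((l : ℝ) * (lam / (lam + M)))) := by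
  have hfactor : ∀ i ∈ Icc 1 l, f i / (lam + f i) ≤ exp (-(lam / (lam + M))) :=
    fun i hi => div_add_le_exp_neg (hf i) (hM i hi) hlam
  calc ∏ i ∈ Icc 1 l, f i / (lam + f i)
      ≤ ∏ _i ∈ Icc 1 l, exp (-(lam / (lam + M))) :=
        prod_le_prod (fun i _ => div_nonneg (hf i) (by linarith [hf i])) hfactor
    _ = exp (-((l : ℝ) * (lam / (lam + M)))) := by
        rw [prod_const, PNat.card_Icc, ← exp_nat_mul, mul_neg]; simp

lemma div_add_mul_rpow_le {lam C γ x : ℝ} (hlam : 0 < lam) (hC : 0 ≤ C) (hγ : 0 ≤ γ)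
    (hx : 1 ≤ x) :
    lam / (lam + C) * x ^ (1 - γ) ≤ x * (lam / (lam + C * x ^ γ)) := by
  have hx0 : 0 < x := by linarith
  have hxγ : 1 ≤ x ^ γ := one_le_rpow hx hγ
  calc lam / (lam + C) * x ^ (1 - γ) = lam * x / ((lam + C) * x ^ γ) := by
        rw [rpow_sub hx0, rpow_one, div_mul_div_comm]
    _ ≤ lam * x / (lam + C * x ^ γ) := by
        gcongr
        nlinarith
    _ = x * (lam / (lam + C * x ^ γ)) := by ring

lemma prod_Icc_div_add_le_exp_neg_mul_rpow {f : ℕ+ → ℝ} (hf : ∀ k, 0 ≤ f k) {C γ lam : ℝ}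
    (hC : 0 ≤ C) (hγ : 0 ≤ γ) (hbound : ∀ k : ℕ+, f k ≤ C * (k : ℝ) ^ γ) (hlam : 0 < lam)
    (l : ℕ+) :
    ∏ i ∈ Icc 1 l, f i / (lam + f i) ≤ exp (-(lam / (lam + C) * (l : ℝ) ^ (1 - γ))) := by
  have hl : (1 : ℝ) ≤ l := by exact_mod_cast l.pos
  have hM : ∀ i ∈ Icc 1 l, f i ≤ C * (l : ℝ) ^ γ := fun i hi =>
    (hbound i).trans <| by gcongr; exact_mod_cast (mem_Icc.mp hi).2
  calc ∏ i ∈ Icc 1 l, f i / (lam + f i)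
      ≤ exp (-((l : ℝ) * (lam / (lam + C * (l : ℝ) ^ γ)))) :=
        prod_Icc_div_add_le_exp hf hlam hM
    _ ≤ exp (-(lam / (lam + C) * (l : ℝ) ^ (1 - γ))) :=
        exp_le_exp.mpr <| neg_le_neg <| div_add_mul_rpow_le hlam hC hγ hl

/-- If `f : ℕ₊ → (0,∞)` satisfies `f k ≤ C k^β` for all `k`, for some
`C > 0` and `β < 1`, then for every `λ > 0` the series
`ρ_f(λ) = Σ_{l=1}^∞ ∏_{i=1}^l f(i)/(λ + f(i))` converges. -/
theorem stmt_3 (f : ℕ+ → ℝ) (hf : ∀ k, 0 < f k)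
    (C β : ℝ) (hC : 0 < C) (hβ : β < 1)
    (hbound : ∀ k : ℕ+, f k ≤ C * (k : ℝ) ^ β)
    (lam : ℝ) (hlam : 0 < lam) :
    Summable (fun l : ℕ+ => ∏ i ∈ Finset.Icc 1 l, f i / (lam + f i)) := by
  set γ := max β 0
  have hbound' : ∀ k : ℕ+, f k ≤ C * (k : ℝ) ^ γ := fun k =>
    (hbound k).trans <| by
      gcongr
      · exact_mod_cast k.pos
      · exact le_max_left _ _
  have hsum : Summable fun l : ℕ+ => exp (-(lam / (lam + C) * (l : ℝ) ^ (1 - γ))) :=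
    (summable_exp_neg_mul_rpow (div_pos hlam (by linarith))
      (sub_pos.mpr (max_lt hβ one_pos))).comp_injective PNat.coe_injective
  refine hsum.of_nonneg_of_le (fun l => prod_nonneg fun i _ => ?_)
    (prod_Icc_div_add_le_exp_neg_mul_rpow (fun k => (hf k).le) hC.le (le_max_right _ _)
      hbound' hlam)
  exact div_nonneg (hf i).le (by linarith [hf i])
end

section
/- Let α > −1 and f(k) = k + α for k ∈ ℕ₊. Then for every λ > 1, ρ_f(λ) = Σ_{l=1}^{∞} ∏_{k=1}^{l} (k + α)/(λ + k + α) = (1 + α)/(λ − 1). In particular, λ* = 2 + α is the unique λ > 1 with ρ_f(λ) = 1. -/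
/-!
Write `P n = ∏_{k=1}^n (k+α)/(λ+k+α)`. The recursion `P (n+1) (λ+n+1+α) = P n (n+1+α)` makes
`T n = (n+1+α) P n` telescope: `T n - T (n+1) = (λ-1) P (n+1)`. So for `λ > 1` the sequence `T` is
positive and decreasing, and `ρ(λ) = (T 0 - lim T)/(λ-1)` with `T 0 = 1+α`. Finally `lim T = 0`:
otherwise `P n = T n/(n+1+α)` would dominate a multiple of the harmonic series, while the
telescoping shows that `∑ P n` converges.
-/

open Filter Topology Finset

theorem Finset.prod_Icc_one_pnat {M : Type*} [CommMonoid M] (f : ℕ → M) (l : ℕ+) :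
    ∏ k ∈ Icc (1 : ℕ+) l, f k = ∏ k ∈ Icc 1 (l : ℕ), f k := by
  rw [← PNat.one_coe, ← PNat.map_subtype_embedding_Icc]
  exact (prod_map (Icc (1 : ℕ+) l) (Function.Embedding.subtype fun n : ℕ => 0 < n) f).symm

theorem Antitone.hasSum_sub_succ {T : ℕ → ℝ} {t : ℝ} (hT : Antitone T)
    (h : Tendsto T atTop (𝓝 t)) : HasSum (fun n => T n - T (n + 1)) (T 0 - t) := by
  rw [hasSum_iff_tendsto_nat_of_nonneg fun n => sub_nonneg.2 (hT n.le_succ)]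
  simp_rw [sum_range_sub']
  exact h.const_sub _

theorem Antitone.tendsto_zero_of_summable_div {T : ℕ → ℝ} {c : ℝ} (hT : Antitone T)
    (h0 : ∀ n, 0 ≤ T n) (hc : 0 < c) (hs : Summable fun n : ℕ => T n / (n + c)) :
    Tendsto T atTop (𝓝 0) := by
  have hbdd : BddBelow (Set.range T) := ⟨0, Set.forall_mem_range.2 h0⟩
  suffices (⨅ n, T n) ≤ 0 by
    simpa [le_antisymm this (le_ciInf h0)] using tendsto_atTop_ciInf hT hbdd
  by_contra! ht
  have hdom : Summable fun n : ℕ => (⨅ n, T n) / (n + c) :=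
    hs.of_nonneg_of_le (fun n => by positivity)
      fun n => div_le_div_of_nonneg_right (ciInf_le hbdd n) (by positivity)
  have hharm : Summable fun n : ℕ => 1 / |(n : ℝ) + c| ^ (1 : ℝ) := by
    refine (hdom.div_const (⨅ n, T n)).congr fun n => ?_
    rw [abs_of_pos (by positivity), Real.rpow_one]
    field_simp
  exact lt_irrefl 1 ((Real.summable_one_div_nat_add_rpow c 1).1 hharm)

section AffineAttachment

variable {α lam : ℝ}

noncomputable def affineProd (α lam : ℝ) (n : ℕ) : ℝ :=
  ∏ k ∈ Icc 1 n, ((k : ℝ) + α) / (lam + k + α)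

theorem affineProd_pos (hα : -1 < α) (hlam : 0 ≤ lam) (n : ℕ) : 0 < affineProd α lam n :=
  prod_pos fun k hk => by
    have : (1 : ℝ) ≤ k := by exact_mod_cast (mem_Icc.1 hk).1
    exact div_pos (by linarith) (by linarith)

theorem affineProd_succ_mul {n : ℕ} (h : lam + n + 1 + α ≠ 0) :
    affineProd α lam (n + 1) * (lam + n + 1 + α) = affineProd α lam n * (n + 1 + α) := by
  rw [affineProd, prod_Icc_succ_top (by omega), ← affineProd, mul_assoc]
  push_cast
  rw [← add_assoc, div_mul_cancel₀ _ h]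

theorem affineProd_telescope {n : ℕ} (h : lam + n + 1 + α ≠ 0) :
    (n + 1 + α) * affineProd α lam n - (((n + 1 : ℕ) : ℝ) + 1 + α) * affineProd α lam (n + 1)
      = (lam - 1) * affineProd α lam (n + 1) := by
  push_cast
  linear_combination -(affineProd_succ_mul h)

theorem hasSum_affineProd_succ (hα : -1 < α) (hlam : 1 < lam) :
    HasSum (fun n => affineProd α lam (n + 1)) ((1 + α) / (lam - 1)) := by
  set T : ℕ → ℝ := fun n => (n + 1 + α) * affineProd α lam n
  have hpos := affineProd_pos hα (by linarith : 0 ≤ lam)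
  have hdiff (n : ℕ) : T n - T (n + 1) = (lam - 1) * affineProd α lam (n + 1) :=
    affineProd_telescope (by linarith [(n.cast_nonneg : (0 : ℝ) ≤ n)])
  have hT0 (n : ℕ) : 0 ≤ T n :=
    mul_nonneg (by linarith [(n.cast_nonneg : (0 : ℝ) ≤ n)]) (hpos n).le
  have hanti : Antitone T := antitone_nat_of_succ_le fun n => by
    linarith [hdiff n, mul_pos (sub_pos.2 hlam) (hpos (n + 1))]
  have hne : lam - 1 ≠ 0 := by linarith
  have hsum : Summable fun n : ℕ => T n / (n + (1 + α)) := by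
    have h := (hanti.hasSum_sub_succ
      (tendsto_atTop_ciInf hanti ⟨0, Set.forall_mem_range.2 hT0⟩)).summable
    simp_rw [hdiff, summable_mul_left_iff hne] at h
    refine ((summable_nat_add_iff 1).1 h).congr fun n => ?_
    have : (n : ℝ) + (1 + α) ≠ 0 := by linarith [(n.cast_nonneg : (0 : ℝ) ≤ n)]
    simp only [T]
    field_simp
    ring
  have h := hanti.hasSum_sub_succ (hanti.tendsto_zero_of_summable_div hT0 (by linarith) hsum)
  simp_rw [hdiff] at h
  rw [← hasSum_mul_left_iff hne, mul_div_cancel₀ _ hne]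
  simpa [T, affineProd] using h

end AffineAttachment

/-- For the affine PA function `f(k) = k + α` with `α > −1`, for every
`λ > 1` the series `ρ_f(λ) = Σ_{l=1}^∞ ∏_{k=1}^l (k+α)/(λ+k+α)` converges with sum
`(1+α)/(λ−1)`; in particular `λ* = 2 + α` is the unique `λ > 1` with `ρ_f(λ) = 1`. -/
theorem stmt_5 (α : ℝ) (hα : -1 < α) :
    (∀ lam : ℝ, 1 < lam →
      Summable (fun l : ℕ+ => ∏ k ∈ Finset.Icc 1 l, ((k : ℝ) + α) / (lam + (k : ℝ) + α)) ∧
      (∑' l : ℕ+, ∏ k ∈ Finset.Icc 1 l, ((k : ℝ) + α) / (lam + (k : ℝ) + α))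
        = (1 + α) / (lam - 1)) ∧
    (∀ lam : ℝ,
      (1 < lam ∧
        (∑' l : ℕ+, ∏ k ∈ Finset.Icc 1 l, ((k : ℝ) + α) / (lam + (k : ℝ) + α)) = 1)
      ↔ lam = 2 + α) := by
  have hρ (lam : ℝ) (hlam : 1 < lam) :
      HasSum (fun l : ℕ+ => ∏ k ∈ Finset.Icc 1 l, ((k : ℝ) + α) / (lam + (k : ℝ) + α))
        ((1 + α) / (lam - 1)) := by
    have h := hasSum_pnat_iff_hasSum_succ.2 (hasSum_affineProd_succ hα hlam)
    refine h.congr_fun fun l => ?_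
    exact prod_Icc_one_pnat (fun k : ℕ => ((k : ℝ) + α) / (lam + k + α)) l
  refine ⟨fun lam hlam => ⟨(hρ lam hlam).summable, (hρ lam hlam).tsum_eq⟩, fun lam => ?_⟩
  constructor
  · rintro ⟨hlam, h1⟩
    rw [(hρ lam hlam).tsum_eq, div_eq_one_iff_eq (by linarith)] at h1
    linarith
  · rintro rfl
    have hlam : 1 < 2 + α := by linarith
    refine ⟨hlam, ?_⟩
    rw [(hρ _ hlam).tsum_eq, div_eq_one_iff_eq (by linarith)]
    ring
end

section
/- Let f: ℕ₊ → (0,∞) and let λ* > 0 satisfy Σ_{l=1}^{∞} ∏_{k=1}^{l} f(k)/(λ* + f(k)) = 1, and define p_k = (λ*/(λ* + f(k))) ∏_{j=1}^{k−1} f(j)/(λ* + f(j)). Then λ* = Σ_{j=1}^{∞} f(j) p_j, and for every k ≥ 1, p_{>k} := Σ_{l>k} p_l = f(k) p_k / Σ_{j=1}^{∞} f(j) p_j. -/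
/-!
Put `π_l = ∏_{k=1}^{l} f(k)/(λ*+f(k))`. Since `λ*/(λ*+f(k)) = 1 - f(k)/(λ*+f(k))`, we get
`p_k = π_{k-1} - π_k` and `f(k) p_k = λ* π_k`. Summing the second identity and using the
normalisation `Σ_{l≥1} π_l = 1` gives `Σ_j f(j) p_j = λ*`; since the `π_l` are summable, the
first telescopes to `p_{>k} = π_k = f(k) p_k / λ*`.
-/

theorem hasSum_sub_succ {G : Type*} [AddCommGroup G] [TopologicalSpace G]
    [IsTopologicalAddGroup G] [T2Space G] {g : ℕ → G} (hg : Summable g) :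
    HasSum (fun n => g n - g (n + 1)) (g 0) := by
  have h := hg.hasSum.sub ((summable_nat_add_iff 1).mpr hg).hasSum
  rwa [hg.tsum_eq_zero_add, add_sub_cancel_right] at h

namespace DegreeDistribution

variable {f : ℕ → ℝ} {lam : ℝ}

/-- The tail `p_{>l}` of the limiting degree distribution, in closed form. -/
noncomputable def tailProb (f : ℕ → ℝ) (lam : ℝ) (l : ℕ) : ℝ :=
  ∏ k ∈ Finset.Icc 1 l, f k / (lam + f k)

noncomputable def degreeDist (f : ℕ → ℝ) (lam : ℝ) (k : ℕ) : ℝ :=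
  lam / (lam + f k) * tailProb f lam (k - 1)

theorem tailProb_succ (f : ℕ → ℝ) (lam : ℝ) (l : ℕ) :
    tailProb f lam (l + 1) = tailProb f lam l * (f (l + 1) / (lam + f (l + 1))) :=
  Finset.prod_Icc_succ_top (Nat.le_add_left 1 l) _

theorem f_mul_degreeDist_succ (hne : ∀ l, lam + f (l + 1) ≠ 0) (l : ℕ) :
    f (l + 1) * degreeDist f lam (l + 1) = lam * tailProb f lam (l + 1) := by
  have := hne l
  rw [degreeDist, Nat.add_sub_cancel, tailProb_succ]
  field_simp

theorem degreeDist_succ (hne : ∀ l, lam + f (l + 1) ≠ 0) (l : ℕ) :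
    degreeDist f lam (l + 1) = tailProb f lam l - tailProb f lam (l + 1) := by
  have := hne l
  rw [degreeDist, Nat.add_sub_cancel, tailProb_succ]
  field_simp
  ring

theorem hasSum_degreeDist_tail (hne : ∀ l, lam + f (l + 1) ≠ 0) (hs : Summable (tailProb f lam))
    (k : ℕ) : HasSum (fun i => degreeDist f lam (k + 1 + i)) (tailProb f lam k) := by
  have hterm (i : ℕ) :
      degreeDist f lam (k + 1 + i) = tailProb f lam (i + k) - tailProb f lam (i + 1 + k) := by
    rw [show k + 1 + i = i + k + 1 by ring, degreeDist_succ hne, add_right_comm]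
  simpa only [zero_add, ← hterm] using hasSum_sub_succ ((summable_nat_add_iff k).mpr hs)

end DegreeDistribution

open DegreeDistribution in
theorem stmt_7_general (f : ℕ → ℝ) (hf : ∀ k, 1 ≤ k → 0 < f k)
    (lam : ℝ) (hlam : 0 < lam)
    (hone : (∑' l : ℕ, ∏ k ∈ Finset.Icc 1 (l + 1), f k / (lam + f k)) = 1)
    (p : ℕ → ℝ)
    (hp : ∀ k, 1 ≤ k →
      p k = lam / (lam + f k) * ∏ j ∈ Finset.Icc 1 (k - 1), f j / (lam + f j)) :
    Summable (fun j : ℕ => f (j + 1) * p (j + 1)) ∧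
    lam = (∑' j : ℕ, f (j + 1) * p (j + 1)) ∧
    (∀ k, 1 ≤ k →
      (∑' l : ℕ, p (k + 1 + l)) = f k * p k / ∑' j : ℕ, f (j + 1) * p (j + 1)) := by
  have hne : ∀ l, lam + f (l + 1) ≠ 0 := fun l => (add_pos hlam (hf _ l.succ_pos)).ne'
  have hp' : ∀ k, 1 ≤ k → p k = degreeDist f lam k := hp
  -- `∑'` of a non-summable series is `0`, so the normalisation forces summability.
  have hsummable : Summable (fun l => tailProb f lam (l + 1)) := by
    by_contra h
    exact zero_ne_one ((tsum_eq_zero_of_not_summable h).symm.trans hone)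
  have hnorm : HasSum (fun l => tailProb f lam (l + 1)) 1 := hone ▸ hsummable.hasSum
  have hmass : HasSum (fun j => f (j + 1) * p (j + 1)) lam := by
    simpa only [hp' _ (Nat.succ_pos _), f_mul_degreeDist_succ hne, mul_one]
      using hnorm.mul_left lam
  refine ⟨hmass.summable, hmass.tsum_eq.symm, fun k hk => ?_⟩
  obtain ⟨l, rfl⟩ := Nat.exists_eq_add_of_le' hk
  have htail := hasSum_degreeDist_tail hne ((summable_nat_add_iff 1).mp hsummable) (l + 1)
  rw [← funext fun i => hp' (l + 1 + 1 + i) (by omega)] at htail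
  rw [htail.tsum_eq, hmass.tsum_eq, hp' _ hk, f_mul_degreeDist_succ hne]
  field_simp

/-- If `λ* > 0` satisfies `Σ_{l=1}^∞ ∏_{k=1}^l f(k)/(λ*+f(k)) = 1` and
`p_k = (λ*/(λ*+f(k))) ∏_{j=1}^{k−1} f(j)/(λ*+f(j))`, then `λ* = Σ_{j=1}^∞ f(j) p_j`
and for every `k ≥ 1`, `p_{>k} = Σ_{l>k} p_l = f(k) p_k / Σ_{j=1}^∞ f(j) p_j`. -/
theorem stmt_7 (f : ℕ → ℝ) (hf : ∀ k, 1 ≤ k → 0 < f k)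
    (lam : ℝ) (hlam : 0 < lam)
    (hsum : Summable (fun l : ℕ => ∏ k ∈ Finset.Icc 1 (l + 1), f k / (lam + f k)))
    (hone : (∑' l : ℕ, ∏ k ∈ Finset.Icc 1 (l + 1), f k / (lam + f k)) = 1)
    (p : ℕ → ℝ)
    (hp : ∀ k, 1 ≤ k →
      p k = lam / (lam + f k) * ∏ j ∈ Finset.Icc 1 (k - 1), f j / (lam + f j)) :
    Summable (fun j : ℕ => f (j + 1) * p (j + 1)) ∧
    lam = (∑' j : ℕ, f (j + 1) * p (j + 1)) ∧
    (∀ k, 1 ≤ k →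
      (∑' l : ℕ, p (k + 1 + l)) = f k * p k / ∑' j : ℕ, f (j + 1) * p (j + 1)) :=
  stmt_7_general f hf lam hlam hone p hp
end

section
/- Let f₀: ℕ₊ → (0,∞) and let (p_k)_{k≥1} be a probability distribution on ℕ₊ with p_k > 0 for every k, λ* := Σ_j f₀(j) p_j < ∞, and p_{>k} := Σ_{l>k} p_l = f₀(k) p_k / λ* for all k ≥ 1; assume Σ_k |log f₀(k)| p_{>k} < ∞. For any f: ℕ₊ → (0,∞) with Σ_k |log f(k)| p_{>k} < ∞ and Σ_k f(k) p_k < ∞, define ι(f) = Σ_{k=1}^{∞} (log f(k)) p_{>k} − log(Σ_{k=1}^{∞} f(k) p_k). Then ι(f) ≤ ι(f₀), with equality if and only if there is a constant c > 0 such that f(k) = c f₀(k) for every k ∈ ℕ₊. -/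
/-!
Put `q = P = f₀ p / λ*`, a probability vector by the identity for `p_{>k}`, and `g = f / f₀`.
Then `ι(f) - ι(f₀) = Σ q log g - log Σ q g`, which is `≤ 0` by Jensen's inequality for `log`.
Jensen's inequality and its equality case come from the Gibbs gap: with `S = Σ q g`,
`log S - Σ q log g = Σ q (g / S - 1 - log (g / S))`, a sum of terms that are nonnegative since
`log x ≤ x - 1` and vanish iff `g = S`, i.e. iff `f = S f₀`.
-/

open Real

lemma sub_one_sub_log_nonneg {x : ℝ} (hx : 0 < x) : 0 ≤ x - 1 - log x := by
  linarith [log_le_sub_one_of_pos hx]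

lemma sub_one_sub_log_eq_zero_iff {x : ℝ} (hx : 0 < x) : x - 1 - log x = 0 ↔ x = 1 := by
  refine ⟨fun h => ?_, fun h => by simp [h]⟩
  by_contra hne
  linarith [log_lt_sub_one_of_pos hx hne]

lemma Summable.mul_of_abs_mul {ι : Type*} {u v : ι → ℝ} (hv : ∀ i, 0 ≤ v i)
    (h : Summable fun i => |u i| * v i) : Summable fun i => u i * v i :=
  h.of_norm_bounded fun i => by rw [norm_mul, norm_eq_abs, norm_eq_abs, abs_of_nonneg (hv i)]

lemma HasSum.pos_of_forall_pos {ι : Type*} [Nonempty ι] {u : ι → ℝ} {s : ℝ} (h : HasSum u s)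
    (hu : ∀ i, 0 < u i) : 0 < s := by
  obtain ⟨i⟩ := ‹Nonempty ι›
  exact h.tsum_eq ▸ h.summable.tsum_pos (fun j => (hu j).le) i (hu i)

section Jensen

variable {ι : Type*} {q g : ι → ℝ}

lemma tsum_mul_pos_of_hasSum_one (hq : HasSum q 1) (hq_nonneg : ∀ i, 0 ≤ q i)
    (hg : ∀ i, 0 < g i) (hqg : Summable fun i => q i * g i) : 0 < ∑' i, q i * g i := by
  obtain ⟨i, hi⟩ : ∃ i, 0 < q i := by
    by_contra! h
    have hq0 : q = 0 := funext fun i => le_antisymm (h i) (hq_nonneg i)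
    exact one_ne_zero (hq.unique (hq0 ▸ hasSum_zero))
  exact hqg.tsum_pos (fun j => mul_nonneg (hq_nonneg j) (hg j).le) i (mul_pos hi (hg i))

lemma hasSum_mul_sub_one_sub_log (hq : HasSum q 1) (hg : ∀ i, g i ≠ 0)
    (hqg : Summable fun i => q i * g i) (hlog : Summable fun i => log (g i) * q i)
    (hS : ∑' i, q i * g i ≠ 0) :
    HasSum (fun i => q i * (g i / ∑' j, q j * g j - 1 - log (g i / ∑' j, q j * g j)))
      (log (∑' i, q i * g i) - ∑' i, log (g i) * q i) := by
  set S := ∑' i, q i * g i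
  have h := (((hqg.hasSum.div_const S).sub hq).sub hlog.hasSum).add (hq.mul_left (log S))
  rw [div_self hS, mul_one, sub_self, zero_sub, neg_add_eq_sub] at h
  refine h.congr_fun fun i => ?_
  rw [log_div (hg i) hS]
  ring

lemma tsum_log_mul_le_log_tsum (hq : HasSum q 1) (hq_nonneg : ∀ i, 0 ≤ q i)
    (hg : ∀ i, 0 < g i) (hqg : Summable fun i => q i * g i)
    (hlog : Summable fun i => log (g i) * q i) :
    ∑' i, log (g i) * q i ≤ log (∑' i, q i * g i) := by
  have hS := tsum_mul_pos_of_hasSum_one hq hq_nonneg hg hqg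
  have hgap := hasSum_mul_sub_one_sub_log hq (fun i => (hg i).ne') hqg hlog hS.ne'
  have := hgap.nonneg fun i => mul_nonneg (hq_nonneg i) (sub_one_sub_log_nonneg (div_pos (hg i) hS))
  linarith

lemma tsum_log_mul_eq_log_tsum_iff (hq : HasSum q 1) (hq_pos : ∀ i, 0 < q i)
    (hg : ∀ i, 0 < g i) (hqg : Summable fun i => q i * g i)
    (hlog : Summable fun i => log (g i) * q i) :
    ∑' i, log (g i) * q i = log (∑' i, q i * g i) ↔ ∃ c, ∀ i, g i = c := by
  refine ⟨fun h => ⟨∑' j, q j * g j, fun i => ?_⟩, fun ⟨c, hc⟩ => ?_⟩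
  · have hS := tsum_mul_pos_of_hasSum_one hq (fun i => (hq_pos i).le) hg hqg
    have hgap := hasSum_mul_sub_one_sub_log hq (fun i => (hg i).ne') hqg hlog hS.ne'
    rw [h, sub_self, hasSum_zero_iff_of_nonneg fun i => mul_nonneg (hq_pos i).le
      (sub_one_sub_log_nonneg (div_pos (hg i) hS))] at hgap
    have hi := congrFun hgap i
    rwa [Pi.zero_apply, mul_eq_zero, or_iff_right (hq_pos i).ne',
      sub_one_sub_log_eq_zero_iff (div_pos (hg i) hS), div_eq_one_iff_eq hS.ne'] at hi
  · simp only [hc, tsum_mul_left, tsum_mul_right, hq.tsum_eq, mul_one, one_mul]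

end Jensen

/-- The functional `ι(f)`, where `P i` stands for `p_{>i}`. -/
noncomputable def limLogLikelihood {ι : Type*} (p P f : ι → ℝ) : ℝ :=
  ∑' i, log (f i) * P i - log (∑' i, f i * p i)

section Reweighting

variable {ι : Type*} [Nonempty ι] {a p f : ι → ℝ} {lam : ℝ}

lemma limLogLikelihood_sub_limLogLikelihood (ha : ∀ i, 0 < a i) (hp : ∀ i, 0 < p i)
    (hf : ∀ i, 0 < f i) (hap : HasSum (fun i => a i * p i) lam)
    (hloga : Summable fun i => log (a i) * (a i * p i / lam))
    (hlogf : Summable fun i => log (f i) * (a i * p i / lam))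
    (hfp : Summable fun i => f i * p i) :
    limLogLikelihood p (fun i => a i * p i / lam) f
        - limLogLikelihood p (fun i => a i * p i / lam) a
      = ∑' i, log (f i / a i) * (a i * p i / lam)
          - log (∑' i, a i * p i / lam * (f i / a i)) := by
  have hlam := hap.pos_of_forall_pos fun i => mul_pos (ha i) (hp i)
  have hfp_pos := hfp.hasSum.pos_of_forall_pos fun i => mul_pos (hf i) (hp i)
  have hlog_div : ∑' i, log (f i / a i) * (a i * p i / lam)
      = ∑' i, log (f i) * (a i * p i / lam) - ∑' i, log (a i) * (a i * p i / lam) := by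
    rw [← hlogf.tsum_sub hloga]
    exact tsum_congr fun i => by rw [log_div (hf i).ne' (ha i).ne']; ring
  have hmean : ∑' i, a i * p i / lam * (f i / a i) = (∑' i, f i * p i) / lam := by
    rw [← tsum_div_const]
    exact tsum_congr fun i => by field_simp [(ha i).ne']
  rw [hlog_div, hmean, log_div hfp_pos.ne' hlam.ne', limLogLikelihood, limLogLikelihood,
    hap.tsum_eq]
  ring

theorem limLogLikelihood_le_and_eq_iff {P : ι → ℝ} (ha : ∀ i, 0 < a i) (hp : ∀ i, 0 < p i)
    (hf : ∀ i, 0 < f i) (hap : HasSum (fun i => a i * p i) lam)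
    (hP : ∀ i, P i = a i * p i / lam)
    (hloga : Summable fun i => |log (a i)| * P i) (hlogf : Summable fun i => |log (f i)| * P i)
    (hfp : Summable fun i => f i * p i) :
    limLogLikelihood p P f ≤ limLogLikelihood p P a ∧
      (limLogLikelihood p P f = limLogLikelihood p P a ↔ ∃ c, 0 < c ∧ ∀ i, f i = c * a i) := by
  obtain rfl : P = fun i => a i * p i / lam := funext hP
  have hlam := hap.pos_of_forall_pos fun i => mul_pos (ha i) (hp i)
  have hP_pos : ∀ i, 0 < a i * p i / lam := fun i => by have := ha i; have := hp i; positivity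
  have hP_sum : HasSum (fun i => a i * p i / lam) 1 := div_self hlam.ne' ▸ hap.div_const lam
  have hg : ∀ i, 0 < f i / a i := fun i => div_pos (hf i) (ha i)
  have hPg : Summable fun i => a i * p i / lam * (f i / a i) :=
    (hfp.div_const lam).congr fun i => by field_simp [(ha i).ne']
  have hloga' := hloga.mul_of_abs_mul fun i => (hP_pos i).le
  have hlogf' := hlogf.mul_of_abs_mul fun i => (hP_pos i).le
  have hlogg : Summable fun i => log (f i / a i) * (a i * p i / lam) :=
    (hlogf'.sub hloga').congr fun i => by rw [log_div (hf i).ne' (ha i).ne']; ring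
  have hdiff := limLogLikelihood_sub_limLogLikelihood ha hp hf hap hloga' hlogf' hfp
  refine ⟨sub_nonpos.mp (hdiff ▸ sub_nonpos.mpr
    (tsum_log_mul_le_log_tsum hP_sum (fun i => (hP_pos i).le) hg hPg hlogg)), ?_⟩
  rw [← sub_eq_zero, hdiff, sub_eq_zero, tsum_log_mul_eq_log_tsum_iff hP_sum hP_pos hg hPg hlogg]
  constructor
  · rintro ⟨c, hc⟩
    obtain ⟨i⟩ := ‹Nonempty ι›
    exact ⟨c, hc i ▸ hg i, fun j => by rw [← hc j, div_mul_cancel₀ _ (ha j).ne']⟩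
  · rintro ⟨c, -, hc⟩
    exact ⟨c, fun i => by rw [hc i, mul_div_cancel_right₀ _ (ha i).ne']⟩

end Reweighting

theorem stmt_13_general (f₀ : ℕ → ℝ) (hf₀ : ∀ k, 1 ≤ k → 0 < f₀ k)
    (p : ℕ → ℝ) (hp0 : ∀ k, 1 ≤ k → 0 < p k)
    (hf₀p : Summable (fun j : ℕ => f₀ (j + 1) * p (j + 1)))
    (lam : ℝ) (hlam : lam = ∑' j : ℕ, f₀ (j + 1) * p (j + 1))
    (P : ℕ → ℝ)
    (hPid : ∀ k, 1 ≤ k → P k = f₀ k * p k / lam)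
    (hlog₀ : Summable (fun k : ℕ => |Real.log (f₀ (k + 1))| * P (k + 1)))
    (f : ℕ → ℝ) (hf : ∀ k, 1 ≤ k → 0 < f k)
    (hlogf : Summable (fun k : ℕ => |Real.log (f (k + 1))| * P (k + 1)))
    (hfp : Summable (fun k : ℕ => f (k + 1) * p (k + 1))) :
    ((∑' k : ℕ, Real.log (f (k + 1)) * P (k + 1))
        - Real.log (∑' k : ℕ, f (k + 1) * p (k + 1)))
      ≤ ((∑' k : ℕ, Real.log (f₀ (k + 1)) * P (k + 1))
        - Real.log (∑' k : ℕ, f₀ (k + 1) * p (k + 1))) ∧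
    (((∑' k : ℕ, Real.log (f (k + 1)) * P (k + 1))
        - Real.log (∑' k : ℕ, f (k + 1) * p (k + 1)))
      = ((∑' k : ℕ, Real.log (f₀ (k + 1)) * P (k + 1))
        - Real.log (∑' k : ℕ, f₀ (k + 1) * p (k + 1)))
      ↔ ∃ c : ℝ, 0 < c ∧ ∀ k, 1 ≤ k → f k = c * f₀ k) := by
  have hsucc : ∀ k : ℕ, 1 ≤ k + 1 := fun k => Nat.le_add_left 1 k
  obtain ⟨hle, heq⟩ := limLogLikelihood_le_and_eq_iff (a := fun k => f₀ (k + 1))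
    (p := fun k => p (k + 1)) (f := fun k => f (k + 1)) (P := fun k => P (k + 1))
    (fun k => hf₀ _ (hsucc k)) (fun k => hp0 _ (hsucc k)) (fun k => hf _ (hsucc k))
    (hlam ▸ hf₀p.hasSum) (fun k => hPid _ (hsucc k)) hlog₀ hlogf hfp
  refine ⟨hle, heq.trans (exists_congr fun c => and_congr_right fun _ => ?_)⟩
  exact ⟨fun h k hk => Nat.succ_pred_eq_of_pos hk ▸ h (k - 1), fun h k => h (k + 1) (hsucc k)⟩

/-- With `(p_k)` a positive probability distribution on ℕ₊ satisfying
`p_{>k} = f₀(k) p_k / λ*` where `λ* = Σ_j f₀(j) p_j`, the limiting log-likelihood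
functional `ι(f) = Σ_k log f(k) p_{>k} − log(Σ_k f(k) p_k)` is maximized at `f₀`:
`ι(f) ≤ ι(f₀)` with equality iff `f = c f₀` for some constant `c > 0`. -/
theorem stmt_13 (f₀ : ℕ → ℝ) (hf₀ : ∀ k, 1 ≤ k → 0 < f₀ k)
    (p : ℕ → ℝ) (hp0 : ∀ k, 1 ≤ k → 0 < p k)
    (hpsum : Summable (fun k : ℕ => p (k + 1)))
    (hp1 : (∑' k : ℕ, p (k + 1)) = 1)
    (hf₀p : Summable (fun j : ℕ => f₀ (j + 1) * p (j + 1)))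
    (lam : ℝ) (hlam : lam = ∑' j : ℕ, f₀ (j + 1) * p (j + 1))
    (P : ℕ → ℝ) (hP : ∀ k, 1 ≤ k → P k = ∑' l : ℕ, p (k + 1 + l))
    (hPid : ∀ k, 1 ≤ k → P k = f₀ k * p k / lam)
    (hlog₀ : Summable (fun k : ℕ => |Real.log (f₀ (k + 1))| * P (k + 1)))
    (f : ℕ → ℝ) (hf : ∀ k, 1 ≤ k → 0 < f k)
    (hlogf : Summable (fun k : ℕ => |Real.log (f (k + 1))| * P (k + 1)))
    (hfp : Summable (fun k : ℕ => f (k + 1) * p (k + 1))) :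
    ((∑' k : ℕ, Real.log (f (k + 1)) * P (k + 1))
        - Real.log (∑' k : ℕ, f (k + 1) * p (k + 1)))
      ≤ ((∑' k : ℕ, Real.log (f₀ (k + 1)) * P (k + 1))
        - Real.log (∑' k : ℕ, f₀ (k + 1) * p (k + 1))) ∧
    (((∑' k : ℕ, Real.log (f (k + 1)) * P (k + 1))
        - Real.log (∑' k : ℕ, f (k + 1) * p (k + 1)))
      = ((∑' k : ℕ, Real.log (f₀ (k + 1)) * P (k + 1))
        - Real.log (∑' k : ℕ, f₀ (k + 1) * p (k + 1)))
      ↔ ∃ c : ℝ, 0 < c ∧ ∀ k, 1 ≤ k → f k = c * f₀ k) :=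
  stmt_13_general f₀ hf₀ p hp0 hf₀p lam hlam P hPid hlog₀ f hf hlogf hfp
end

section
/- Let V₀ be a symmetric positive definite d×d real matrix, a ∈ ℝ^d with a ≠ 0, and z ∈ ℝ^d. Then the function h ↦ 2 hᵀz − hᵀV₀h attains a unique maximum over the half-space {h ∈ ℝ^d : aᵀh ≤ 0}; the maximizer is ĥ = V₀^{−1/2} Π_G(V₀^{−1/2} z), where Π_G is the orthogonal (metric) projection onto the half-space G = {g : (V₀^{−1/2}a)ᵀ g ≤ 0}, and it satisfies aᵀĥ = min(0, aᵀV₀^{−1}z). -/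
open Matrix

/-- The square root of a positive semidefinite matrix, as `Matrix.PosSemidef.sqrt` was defined
in older Mathlib (removed since). -/
noncomputable def Matrix.PosSemidef.sqrt {n : Type*} [Fintype n] [DecidableEq n]
    {A : Matrix n n ℝ} (hA : PosSemidef A) : Matrix n n ℝ :=
  hA.1.eigenvectorUnitary.1 * diagonal ((√·) ∘ hA.1.eigenvalues) *
  (star hA.1.eigenvectorUnitary : Matrix n n ℝ)

/-- Orthogonal (metric) projection onto the closed half-space `{g : b ⬝ᵥ g ≤ 0}`:
it maps `w` to `w` if `b ⬝ᵥ w ≤ 0` and to `w − (b ⬝ᵥ w / |b|²) b` otherwise. -/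
noncomputable def projHalfSpace {d : ℕ} (b w : Fin d → ℝ) : Fin d → ℝ :=
  if b ⬝ᵥ w ≤ 0 then w else w - ((b ⬝ᵥ w) / (b ⬝ᵥ b)) • b

/-!
With `S = V₀^{1/2}`, `g = S h` and `w = S⁻¹ z`, the objective equals `|w|² - |g - w|²` and the
constraint reads `(S⁻¹ a) ⬝ᵥ g ≤ 0`, so maximizing it is projecting `w` onto that half-space.
The projection `p` makes an obtuse angle with every admissible `g`, `(g - p) ⬝ᵥ (p - w) ≥ 0`,
whence `|g - w|² ≥ |p - w|² + |g - p|²`: this gives maximality and uniqueness at once.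
-/

theorem dotProduct_self_nonneg {n R : Type*} [Fintype n] [Ring R] [LinearOrder R]
    [IsStrictOrderedRing R] (v : n → R) : 0 ≤ v ⬝ᵥ v :=
  Finset.sum_nonneg fun i _ ↦ mul_self_nonneg (v i)

namespace Matrix

theorem PosSemidef.isSymm_sqrt {n : Type*} [Fintype n] [DecidableEq n] {A : Matrix n n ℝ}
    (hA : A.PosSemidef) : (PosSemidef.sqrt hA).IsSymm := by
  rw [IsSymm, Matrix.PosSemidef.sqrt, transpose_mul, transpose_mul, diagonal_transpose,
    star_eq_conjTranspose, conjTranspose_eq_transpose_of_trivial, transpose_transpose,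
    Matrix.mul_assoc]

theorem PosSemidef.sqrt_mul_sqrt {n : Type*} [Fintype n] [DecidableEq n] {A : Matrix n n ℝ}
    (hA : A.PosSemidef) : PosSemidef.sqrt hA * PosSemidef.sqrt hA = A := by
  set U := hA.1.eigenvectorUnitary
  set D := diagonal ((√·) ∘ hA.1.eigenvalues)
  have hU : (star U : Matrix n n ℝ) * U = 1 := Unitary.coe_star_mul_self U
  have hD : D * D = diagonal (RCLike.ofReal ∘ hA.1.eigenvalues) := by
    rw [diagonal_mul_diagonal]
    congr 1
    funext i
    exact Real.mul_self_sqrt (hA.eigenvalues_nonneg i)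
  conv_rhs => rw [hA.1.spectral_theorem, Unitary.conjStarAlgAut_apply]
  calc PosSemidef.sqrt hA * PosSemidef.sqrt hA
      = U * (D * ((star U : Matrix n n ℝ) * U) * D) * (star U : Matrix n n ℝ) := by
        simp only [Matrix.PosSemidef.sqrt, Matrix.mul_assoc]; rfl
    _ = _ := by rw [hU, Matrix.mul_one, hD]

theorem IsSymm.mulVec_dotProduct {n α : Type*} [Fintype n] [CommSemiring α] {S : Matrix n n α}
    (hS : S.IsSymm) (u v : n → α) : (S *ᵥ u) ⬝ᵥ v = u ⬝ᵥ (S *ᵥ v) := by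
  rw [dotProduct_mulVec, ← vecMul_transpose, hS.eq]

end Matrix

section HalfSpace

variable {d : ℕ} (b w : Fin d → ℝ)

theorem dotProduct_projHalfSpace : b ⬝ᵥ projHalfSpace b w = min 0 (b ⬝ᵥ w) := by
  unfold projHalfSpace
  split_ifs with hbw
  · exact (min_eq_right hbw).symm
  · have hb : b ⬝ᵥ b ≠ 0 := fun h ↦ by
      rw [dotProduct_self_eq_zero.1 h, zero_dotProduct] at hbw
      exact hbw le_rfl
    rw [dotProduct_sub, dotProduct_smul, smul_eq_mul, div_mul_cancel₀ _ hb, sub_self,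
      min_eq_left (not_le.1 hbw).le]

theorem dotProduct_sub_projHalfSpace_nonneg {g : Fin d → ℝ} (hg : b ⬝ᵥ g ≤ 0) :
    0 ≤ (g - projHalfSpace b w) ⬝ᵥ (projHalfSpace b w - w) := by
  have hp := dotProduct_projHalfSpace b w
  unfold projHalfSpace at hp ⊢
  split_ifs at hp ⊢ with hbw
  · simp
  · -- `p - w = -t • b` with `t ≥ 0` and `b ⬝ᵥ p = 0`, so the product is `-t (b ⬝ᵥ g)`.
    have ht : 0 ≤ b ⬝ᵥ w / (b ⬝ᵥ b) := div_nonneg (not_le.1 hbw).le (dotProduct_self_nonneg b)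
    rw [min_eq_left (not_le.1 hbw).le, dotProduct_comm b] at hp
    rw [sub_sub_cancel_left, dotProduct_neg, dotProduct_smul, smul_eq_mul, sub_dotProduct, hp,
      sub_zero, dotProduct_comm g b]
    exact neg_nonneg.2 (mul_nonpos_of_nonneg_of_nonpos ht hg)

theorem dotProduct_self_sub_projHalfSpace_add_le {g : Fin d → ℝ} (hg : b ⬝ᵥ g ≤ 0) :
    (projHalfSpace b w - w) ⬝ᵥ (projHalfSpace b w - w)
        + (g - projHalfSpace b w) ⬝ᵥ (g - projHalfSpace b w) ≤ (g - w) ⬝ᵥ (g - w) := by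
  have hcross := dotProduct_sub_projHalfSpace_nonneg b w hg
  set p := projHalfSpace b w
  rw [show g - w = (g - p) + (p - w) by abel, add_dotProduct, dotProduct_add, dotProduct_add,
    dotProduct_comm (p - w) (g - p)]
  linarith

end HalfSpace

namespace Matrix.IsSymm

theorem two_mul_dotProduct_sub_dotProduct_mul_self_mulVec {n α : Type*} [Fintype n]
    [DecidableEq n] [CommRing α] {S : Matrix n n α} (hS : S.IsSymm) (hdet : IsUnit S.det)
    (h z : n → α) :
    2 * (h ⬝ᵥ z) - h ⬝ᵥ ((S * S) *ᵥ h) =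
      (S⁻¹ *ᵥ z) ⬝ᵥ (S⁻¹ *ᵥ z) - (S *ᵥ h - S⁻¹ *ᵥ z) ⬝ᵥ (S *ᵥ h - S⁻¹ *ᵥ z) := by
  have hz : h ⬝ᵥ z = (S *ᵥ h) ⬝ᵥ (S⁻¹ *ᵥ z) := by
    rw [hS.mulVec_dotProduct, mulVec_mulVec, mul_nonsing_inv _ hdet, one_mulVec]
  rw [hz, ← mulVec_mulVec, ← hS.mulVec_dotProduct]
  simp only [sub_dotProduct, dotProduct_sub, dotProduct_comm (S⁻¹ *ᵥ z)]
  ring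

variable {d : ℕ} {S V : Matrix (Fin d) (Fin d) ℝ} {a z hhat : Fin d → ℝ}

theorem two_mul_dotProduct_sub_add_le_of_projHalfSpace (hS : S.IsSymm) (hdet : IsUnit S.det)
    (hV : S * S = V) (hhat_eq : hhat = S⁻¹ *ᵥ projHalfSpace (S⁻¹ *ᵥ a) (S⁻¹ *ᵥ z))
    {h : Fin d → ℝ} (hh : a ⬝ᵥ h ≤ 0) :
    2 * (h ⬝ᵥ z) - h ⬝ᵥ (V *ᵥ h) + (S *ᵥ (h - hhat)) ⬝ᵥ (S *ᵥ (h - hhat)) ≤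
      2 * (hhat ⬝ᵥ z) - hhat ⬝ᵥ (V *ᵥ hhat) := by
  have hShhat : S *ᵥ hhat = projHalfSpace (S⁻¹ *ᵥ a) (S⁻¹ *ᵥ z) := by
    rw [hhat_eq, mulVec_mulVec, mul_nonsing_inv _ hdet, one_mulVec]
  have hg : (S⁻¹ *ᵥ a) ⬝ᵥ (S *ᵥ h) ≤ 0 := by
    rwa [hS.inv.mulVec_dotProduct, mulVec_mulVec, nonsing_inv_mul _ hdet, one_mulVec]
  have hpyth := dotProduct_self_sub_projHalfSpace_add_le _ (S⁻¹ *ᵥ z) hg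
  rw [← hV, two_mul_dotProduct_sub_dotProduct_mul_self_mulVec hS hdet,
    two_mul_dotProduct_sub_dotProduct_mul_self_mulVec hS hdet, mulVec_sub, hShhat]
  linarith

theorem dotProduct_eq_min_of_projHalfSpace (hS : S.IsSymm) (hV : S * S = V)
    (hhat_eq : hhat = S⁻¹ *ᵥ projHalfSpace (S⁻¹ *ᵥ a) (S⁻¹ *ᵥ z)) :
    a ⬝ᵥ hhat = min 0 (a ⬝ᵥ (V⁻¹ *ᵥ z)) := by
  rw [hhat_eq, ← hS.inv.mulVec_dotProduct, dotProduct_projHalfSpace,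
    hS.inv.mulVec_dotProduct, mulVec_mulVec, ← mul_inv_rev, hV]

end Matrix.IsSymm

theorem stmt_15_general {d : ℕ} (V₀ : Matrix (Fin d) (Fin d) ℝ) (hV₀ : V₀.PosDef)
    (a z : Fin d → ℝ) :
    ∀ hhat : Fin d → ℝ,
      hhat = (PosSemidef.sqrt hV₀.posSemidef)⁻¹
          *ᵥ projHalfSpace ((PosSemidef.sqrt hV₀.posSemidef)⁻¹ *ᵥ a) ((PosSemidef.sqrt hV₀.posSemidef)⁻¹ *ᵥ z) →
      (a ⬝ᵥ hhat ≤ 0) ∧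
      (∀ h : Fin d → ℝ, a ⬝ᵥ h ≤ 0 →
        2 * (h ⬝ᵥ z) - h ⬝ᵥ (V₀ *ᵥ h) ≤ 2 * (hhat ⬝ᵥ z) - hhat ⬝ᵥ (V₀ *ᵥ hhat)) ∧
      (∀ h : Fin d → ℝ, a ⬝ᵥ h ≤ 0 →
        2 * (h ⬝ᵥ z) - h ⬝ᵥ (V₀ *ᵥ h) = 2 * (hhat ⬝ᵥ z) - hhat ⬝ᵥ (V₀ *ᵥ hhat) →
        h = hhat) ∧
      a ⬝ᵥ hhat = min 0 (a ⬝ᵥ (V₀⁻¹ *ᵥ z)) := by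
  intro hhat hhat_eq
  set S := PosSemidef.sqrt hV₀.posSemidef
  have hS : S.IsSymm := hV₀.posSemidef.isSymm_sqrt
  have hSS : S * S = V₀ := hV₀.posSemidef.sqrt_mul_sqrt
  have hdet : IsUnit S.det := isUnit_of_mul_isUnit_left <| by
    rw [← det_mul, hSS, ← isUnit_iff_isUnit_det]
    exact hV₀.isUnit
  have hgain := fun h (hh : a ⬝ᵥ h ≤ 0) ↦
    hS.two_mul_dotProduct_sub_add_le_of_projHalfSpace hdet hSS hhat_eq hh
  have hmin := hS.dotProduct_eq_min_of_projHalfSpace hSS hhat_eq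
  refine ⟨hmin ▸ min_le_left _ _, fun h hh ↦ ?_, fun h hh heq ↦ ?_, hmin⟩
  · linarith [hgain h hh, dotProduct_self_nonneg (S *ᵥ (h - hhat))]
  · have hzero : S *ᵥ (h - hhat) = 0 := by
      rw [← dotProduct_self_eq_zero]
      linarith [hgain h hh, dotProduct_self_nonneg (S *ᵥ (h - hhat))]
    exact sub_eq_zero.1 (eq_zero_of_mulVec_eq_zero hdet.ne_zero hzero)

/-- For `V₀` symmetric positive definite, `a ≠ 0` and any `z`, the map
`h ↦ 2 hᵀz − hᵀV₀h` attains a unique maximum over `{h : aᵀh ≤ 0}`, at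
`ĥ = V₀^{−1/2} Π_G (V₀^{−1/2} z)` where `Π_G` is the projection onto the half-space
`G = {g : (V₀^{−1/2}a)ᵀ g ≤ 0}`, and `aᵀĥ = min(0, aᵀ V₀⁻¹ z)`. -/
theorem stmt_15 {d : ℕ} (V₀ : Matrix (Fin d) (Fin d) ℝ) (hV₀ : V₀.PosDef)
    (a z : Fin d → ℝ) (ha : a ≠ 0) :
    ∀ hhat : Fin d → ℝ,
      hhat = (PosSemidef.sqrt hV₀.posSemidef)⁻¹
          *ᵥ projHalfSpace ((PosSemidef.sqrt hV₀.posSemidef)⁻¹ *ᵥ a) ((PosSemidef.sqrt hV₀.posSemidef)⁻¹ *ᵥ z) →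
      (a ⬝ᵥ hhat ≤ 0) ∧
      (∀ h : Fin d → ℝ, a ⬝ᵥ h ≤ 0 →
        2 * (h ⬝ᵥ z) - h ⬝ᵥ (V₀ *ᵥ h) ≤ 2 * (hhat ⬝ᵥ z) - hhat ⬝ᵥ (V₀ *ᵥ hhat)) ∧
      (∀ h : Fin d → ℝ, a ⬝ᵥ h ≤ 0 →
        2 * (h ⬝ᵥ z) - h ⬝ᵥ (V₀ *ᵥ h) = 2 * (hhat ⬝ᵥ z) - hhat ⬝ᵥ (V₀ *ᵥ hhat) →
        h = hhat) ∧
      a ⬝ᵥ hhat = min 0 (a ⬝ᵥ (V₀⁻¹ *ᵥ z)) :=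
  stmt_15_general V₀ hV₀ a z
end

section
/- Let V be a positive semidefinite symmetric d×d real matrix, V₀ a symmetric positive definite d×d real matrix, and a ∈ ℝ^d with a ≠ 0. Let Z be a random vector in ℝ^d with the centered multivariate Gaussian distribution N(0, V), and let ĥ be the (unique) maximizer of h ↦ 2hᵀZ − hᵀV₀h over {h : aᵀh ≤ 0}. Then aᵀĥ = min(0, aᵀV₀^{−1}Z), and its law equals the law of W·1{W ≤ 0} where W is a real Gaussian random variable with mean 0 and variance aᵀV₀^{−1}VV₀^{−1}a; equivalently, the pushforward of N(0, V) under the map z ↦ min(0, aᵀV₀^{−1}z) equals the pushforward of the real Gaussian measure N(0, aᵀV₀^{−1}VV₀^{−1}a) under w ↦ min(0, w). -/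
/-!
Completing the square, `2 hᵀz − hᵀV₀h = sᵀz − (h − s)ᵀV₀(h − s)` with `s = V₀⁻¹z`, so `ĥ` is the
`V₀`-projection of `s` onto the half-space `aᵀh ≤ 0`. If `aᵀs ≤ 0` the projection is `s` itself;
otherwise it lies on the boundary hyperplane, since moving from an interior point towards `s`
decreases the distance. Hence `aᵀĥ = min(0, aᵀs) = min(0, uᵀz)` with `u = V₀⁻¹a`, and `uᵀZ` is
centered Gaussian with variance `uᵀVu = aᵀV₀⁻¹VV₀⁻¹a`.
-/
open Matrix MeasureTheory ProbabilityTheory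

namespace Matrix

variable {n : Type*} [Fintype n]

lemma two_dotProduct_sub_dotProduct_mulVec_eq {A : Matrix n n ℝ} (hA : Aᵀ = A)
    {s z : n → ℝ} (hs : A *ᵥ s = z) (h : n → ℝ) :
    2 * (h ⬝ᵥ z) - h ⬝ᵥ (A *ᵥ h) = s ⬝ᵥ z - (h - s) ⬝ᵥ (A *ᵥ (h - s)) := by
  have hsym : s ⬝ᵥ (A *ᵥ h) = h ⬝ᵥ z := by
    rw [dotProduct_mulVec, ← mulVec_transpose, hA, dotProduct_comm, hs]
  simp only [mulVec_sub, dotProduct_sub, sub_dotProduct, hs, hsym]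
  ring

lemma PosDef.dotProduct_eq_min_of_isMinOn {A : Matrix n n ℝ} (hA : A.PosDef)
    {a s h : n → ℝ}
    (hmin : IsMinOn (fun x => (x - s) ⬝ᵥ (A *ᵥ (x - s))) {x | a ⬝ᵥ x ≤ 0} h)
    (hh : a ⬝ᵥ h ≤ 0) :
    a ⬝ᵥ h = min 0 (a ⬝ᵥ s) := by
  rcases le_or_gt (a ⬝ᵥ s) 0 with hs | hs
  · have hle : (h - s) ⬝ᵥ (A *ᵥ (h - s)) ≤ 0 := by
      simpa using isMinOn_iff.mp hmin s hs
    have : h - s = 0 := by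
      by_contra hne
      exact (hle.trans_lt (by simpa using hA.dotProduct_mulVec_pos hne)).false
    rw [sub_eq_zero.mp this, min_eq_right hs]
  · rw [min_eq_left hs.le]
    refine hh.antisymm (not_lt.mp fun hlt => ?_)
    -- the point of the segment from `h` to `s` on the hyperplane `a ⬝ᵥ x = 0` is closer to `s`
    set t := a ⬝ᵥ s / (a ⬝ᵥ s - a ⬝ᵥ h)
    have ht0 : 0 < t := div_pos hs (by linarith)
    have ht1 : t < 1 := (div_lt_one (by linarith)).mpr (by linarith)
    have hfeas : a ⬝ᵥ (s + t • (h - s)) ≤ 0 := by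
      have : t * (a ⬝ᵥ s - a ⬝ᵥ h) = a ⬝ᵥ s := div_mul_cancel₀ _ (by linarith)
      rw [dotProduct_add, dotProduct_smul, dotProduct_sub, smul_eq_mul]
      linarith
    have hpos : 0 < (h - s) ⬝ᵥ (A *ᵥ (h - s)) :=
      hA.dotProduct_mulVec_pos (sub_ne_zero.mpr (by rintro rfl; linarith))
    have hle := isMinOn_iff.mp hmin _ hfeas
    simp only [add_sub_cancel_left, mulVec_smul, dotProduct_smul, smul_dotProduct,
      smul_eq_mul] at hle
    nlinarith [mul_pos (by nlinarith : 0 < 1 - t * t) hpos]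

end Matrix

theorem stmt_16_general {d : ℕ} {Ω : Type*} [MeasurableSpace Ω] (P : Measure Ω)
    (V V₀ : Matrix (Fin d) (Fin d) ℝ) (hV₀ : V₀.PosDef)
    (a : Fin d → ℝ)
    (Z : Ω → (Fin d → ℝ))
    (hZgauss : ∀ u : Fin d → ℝ,
      Measure.map (fun ω => u ⬝ᵥ Z ω) P = gaussianReal 0 (Real.toNNReal (u ⬝ᵥ (V *ᵥ u)))) :
    (∀ ω : Ω, ∀ h : Fin d → ℝ,
      a ⬝ᵥ h ≤ 0 →
      (∀ h' : Fin d → ℝ, a ⬝ᵥ h' ≤ 0 →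
        2 * (h' ⬝ᵥ Z ω) - h' ⬝ᵥ (V₀ *ᵥ h') ≤ 2 * (h ⬝ᵥ Z ω) - h ⬝ᵥ (V₀ *ᵥ h)) →
      a ⬝ᵥ h = min 0 (a ⬝ᵥ (V₀⁻¹ *ᵥ Z ω))) ∧
    Measure.map (fun ω => min 0 (a ⬝ᵥ (V₀⁻¹ *ᵥ Z ω))) P
      = Measure.map (fun w : ℝ => min 0 w)
          (gaussianReal 0 (Real.toNNReal (a ⬝ᵥ ((V₀⁻¹ * V * V₀⁻¹) *ᵥ a)))) := by
  have hV₀T : V₀ᵀ = V₀ := hV₀.isHermitian.eq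
  have hV₀invT : V₀⁻¹ᵀ = V₀⁻¹ := hV₀.inv.isHermitian.eq
  refine ⟨fun ω h hh hmax => hV₀.dotProduct_eq_min_of_isMinOn (fun x hx => ?_) hh, ?_⟩
  · have hsol : V₀ *ᵥ (V₀⁻¹ *ᵥ Z ω) = Z ω := by
      rw [mulVec_mulVec, mul_nonsing_inv _ ((isUnit_iff_isUnit_det V₀).mp hV₀.isUnit),
        one_mulVec]
    have := hmax x hx
    rw [two_dotProduct_sub_dotProduct_mulVec_eq hV₀T hsol,
      two_dotProduct_sub_dotProduct_mulVec_eq hV₀T hsol] at this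
    exact sub_le_sub_iff_left _ |>.mp this
  · have hu : V₀⁻¹ *ᵥ a = a ᵥ* V₀⁻¹ := by rw [← mulVec_transpose, hV₀invT]
    simp_rw [dotProduct_mulVec a V₀⁻¹]
    set u := a ᵥ* V₀⁻¹
    have hvar : u ⬝ᵥ (V *ᵥ u) = a ⬝ᵥ ((V₀⁻¹ * V * V₀⁻¹) *ᵥ a) := by
      rw [← mulVec_mulVec, ← mulVec_mulVec, dotProduct_mulVec a V₀⁻¹, hu]
    have hX : AEMeasurable (fun ω => u ⬝ᵥ Z ω) P :=
      .of_map_ne_zero (by rw [hZgauss u]; exact IsProbabilityMeasure.ne_zero _)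
    have hmin : Measurable fun w : ℝ => min 0 w := measurable_const.min measurable_id
    rw [← hvar, ← hZgauss u, AEMeasurable.map_map_of_aemeasurable hmin.aemeasurable hX,
      Function.comp_def]

/-- Let `Z ~ N(0, V)` be a centered Gaussian vector (characterized by its
one-dimensional projections), `V₀` symmetric positive definite, `a ≠ 0`, and let `ĥ` be
the maximizer of `h ↦ 2hᵀZ − hᵀV₀h` over `{h : aᵀh ≤ 0}`. Then `aᵀĥ = min(0, aᵀV₀⁻¹Z)`,
and the law of `aᵀĥ` is that of `W·1{W ≤ 0}` with `W ~ N(0, aᵀV₀⁻¹VV₀⁻¹a)`: the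
pushforward of the law of `Z` under `z ↦ min(0, aᵀV₀⁻¹z)` equals the pushforward of
`N(0, aᵀV₀⁻¹VV₀⁻¹a)` under `w ↦ min(0, w)`. -/
theorem stmt_16 {d : ℕ} {Ω : Type*} [MeasurableSpace Ω] (P : Measure Ω)
    [IsProbabilityMeasure P]
    (V V₀ : Matrix (Fin d) (Fin d) ℝ) (hV : V.PosSemidef) (hV₀ : V₀.PosDef)
    (a : Fin d → ℝ) (ha : a ≠ 0)
    (Z : Ω → (Fin d → ℝ)) (hZmeas : Measurable Z)
    (hZgauss : ∀ u : Fin d → ℝ,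
      Measure.map (fun ω => u ⬝ᵥ Z ω) P = gaussianReal 0 (Real.toNNReal (u ⬝ᵥ (V *ᵥ u)))) :
    (∀ ω : Ω, ∀ h : Fin d → ℝ,
      a ⬝ᵥ h ≤ 0 →
      (∀ h' : Fin d → ℝ, a ⬝ᵥ h' ≤ 0 →
        2 * (h' ⬝ᵥ Z ω) - h' ⬝ᵥ (V₀ *ᵥ h') ≤ 2 * (h ⬝ᵥ Z ω) - h ⬝ᵥ (V₀ *ᵥ h)) →
      a ⬝ᵥ h = min 0 (a ⬝ᵥ (V₀⁻¹ *ᵥ Z ω))) ∧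
    Measure.map (fun ω => min 0 (a ⬝ᵥ (V₀⁻¹ *ᵥ Z ω))) P
      = Measure.map (fun w : ℝ => min 0 w)
          (gaussianReal 0 (Real.toNNReal (a ⬝ᵥ ((V₀⁻¹ * V * V₀⁻¹) *ᵥ a)))) :=
  stmt_16_general P V V₀ hV₀ a Z hZgauss
end

section
/- Let α > −1 and κ ≥ 2 be an integer. Define the (κ+1)×(κ+1) real matrix A_κ by: A_{1,1} = 0, A_{1,j} = j + α for 2 ≤ j ≤ κ, A_{1,κ+1} = 1; A_{j+1,j} = j + α for 1 ≤ j ≤ κ − 1; A_{j,j} = −(j + α) for 2 ≤ j ≤ κ; A_{κ+1,κ} = (κ + α)(κ + 1 + α); A_{κ+1,κ+1} = 1; and all other entries 0. Then the characteristic polynomial of A_κ satisfies det(λI − A_κ) = (λ − (2 + α)) · ∏_{l=1}^{κ} (λ + l + α) for all λ ∈ ℝ. In particular, 2 + α is the unique positive eigenvalue of A_κ and all other eigenvalues are the real numbers −(l + α), l = 1, …, κ. -/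
/-!
Below its first row, `λI - A_κ` is lower bidiagonal, so expanding along the first column gives a
two-term recursion: the minor without the first row is triangular, and the minor without the
second row has the same shape, for `α + 1` and `κ - 1`, once the top-left entry `λ` is replaced
by `-(1 + α)`. With that replacement the determinant is `-(1 + α) ∏_{l=1}^κ (λ + l + α)` by
induction, and restoring `λ` adds `(λ + 1 + α)(λ - 1) ∏_{l=2}^κ (λ + l + α)`.
-/

/-- The `(κ+1) × (κ+1)` transfer matrix `A_κ` of the generalized Pólya urn
representation of the affine preferential attachment tree with attachment function
`f(k) = k + α` (rows/columns indexed by `1, …, κ+1`, realized by `Fin (κ+1)` via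
`i ↦ i + 1`). -/
def PATransferMatrix (α : ℝ) (κ : ℕ) : Matrix (Fin (κ + 1)) (Fin (κ + 1)) ℝ :=
  Matrix.of fun i j =>
    let I := (i : ℕ) + 1
    let J := (j : ℕ) + 1
    if I = 1 then
      (if J = 1 then 0 else if J = κ + 1 then 1 else (J : ℝ) + α)
    else if I = κ + 1 then
      (if J = κ then ((κ : ℝ) + α) * ((κ : ℝ) + 1 + α) else if J = κ + 1 then 1 else 0)
    else if I = J then -((I : ℝ) + α)
    else if I = J + 1 then (J : ℝ) + α
    else 0

namespace Matrix

variable {R : Type*} [CommRing R]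

def lowerBidiagonalWithTopRow {n : ℕ} (r : Fin (n + 1) → R) (s d : Fin n → R) :
    Matrix (Fin (n + 1)) (Fin (n + 1)) R :=
  of <| Fin.cons r fun i j => if j = i.castSucc then s i else if j = i.succ then d i else 0

@[simp]
theorem lowerBidiagonalWithTopRow_apply_zero {n : ℕ} (r : Fin (n + 1) → R) (s d : Fin n → R)
    (j : Fin (n + 1)) : lowerBidiagonalWithTopRow r s d 0 j = r j := rfl

@[simp]
theorem lowerBidiagonalWithTopRow_apply_succ {n : ℕ} (r : Fin (n + 1) → R) (s d : Fin n → R)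
    (i : Fin n) (j : Fin (n + 1)) : lowerBidiagonalWithTopRow r s d i.succ j =
      if j = i.castSucc then s i else if j = i.succ then d i else 0 := rfl

theorem det_lowerBidiagonalWithTopRow_zero (r : Fin 1 → R) (s d : Fin 0 → R) :
    (lowerBidiagonalWithTopRow r s d).det = r 0 :=
  det_fin_one _

theorem det_lowerBidiagonalWithTopRow_submatrix_succ {n : ℕ} (r : Fin (n + 1) → R)
    (s d : Fin n → R) :
    ((lowerBidiagonalWithTopRow r s d).submatrix Fin.succ Fin.succ).det = ∏ i, d i := by
  rw [det_of_isLowerTriangular]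
  · simp [Fin.ext_iff]
  · intro i j hij
    have hlt : (i : ℕ) < j := hij
    simp only [submatrix_apply, lowerBidiagonalWithTopRow_apply_succ, Fin.ext_iff,
      Fin.val_succ, Fin.val_castSucc]
    rw [if_neg (by omega), if_neg (by omega)]

theorem det_lowerBidiagonalWithTopRow_succ {n : ℕ} (r : Fin (n + 2) → R)
    (s d : Fin (n + 1) → R) :
    (lowerBidiagonalWithTopRow r s d).det = r 0 * ∏ i, d i -
      s 0 * (lowerBidiagonalWithTopRow (Fin.tail r) (Fin.tail s) (Fin.tail d)).det := by
  rw [det_succ_column_zero, Fin.sum_univ_succ, Fin.sum_univ_succ]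
  have hminor : (lowerBidiagonalWithTopRow r s d).submatrix (Fin.succAbove 1) Fin.succ =
      lowerBidiagonalWithTopRow (Fin.tail r) (Fin.tail s) (Fin.tail d) := by
    ext i j
    cases i using Fin.cases <;> simp [Fin.tail, Fin.ext_iff]
  have hrest : ∀ i : Fin n, (lowerBidiagonalWithTopRow r s d) i.succ.succ 0 = 0 := by
    intro i; simp [Fin.ext_iff]
  have hsub : lowerBidiagonalWithTopRow r s d 1 0 = s 0 := by
    simpa using lowerBidiagonalWithTopRow_apply_succ r s d 0 0
  simp [hrest, hminor, hsub, det_lowerBidiagonalWithTopRow_submatrix_succ, sub_eq_add_neg]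

theorem det_lowerBidiagonalWithTopRow_update_zero {n : ℕ} (r : Fin (n + 2) → R)
    (s d : Fin (n + 1) → R) (x : R) :
    (lowerBidiagonalWithTopRow (Function.update r 0 x) s d).det =
      (lowerBidiagonalWithTopRow r s d).det + (x - r 0) * ∏ i, d i := by
  rw [det_lowerBidiagonalWithTopRow_succ, det_lowerBidiagonalWithTopRow_succ,
    Fin.tail_update_zero, Function.update_self]
  ring

end Matrix

namespace PATransferMatrix

open Matrix Finset

/- The first row, subdiagonal and diagonal of `λ • 1 - PATransferMatrix α n`, indexed from `0`;
the top-left entry `λ` is replaced by `-(1 + α)`, which is what `topRow α n 0` gives. -/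
def topRow (α : ℝ) (n j : ℕ) : ℝ := if j = n then -1 else -(j + 1 + α)

def subdiag (α : ℝ) (n i : ℕ) : ℝ := if i + 1 = n then -((n + α) * (n + 1 + α)) else -(i + 1 + α)

def diag (lam α : ℝ) (n i : ℕ) : ℝ := if i + 1 = n then lam - 1 else lam + i + 2 + α

/- Deleting its second row and first column leaves `reducedCharMatrix lam (α + 1) (n - 1)`. -/
def reducedCharMatrix (lam α : ℝ) (n : ℕ) : Matrix (Fin (n + 1)) (Fin (n + 1)) ℝ :=
  lowerBidiagonalWithTopRow (fun j => topRow α n j) (fun i => subdiag α n i)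
    (fun i => diag lam α n i)

theorem tail_topRow (α : ℝ) (n : ℕ) :
    Fin.tail (fun j : Fin (n + 2) => topRow α (n + 1) j) =
      fun j : Fin (n + 1) => topRow (α + 1) n j := by
  funext j
  simp only [Fin.tail, Fin.val_succ, topRow]
  split_ifs <;> first | omega | (push_cast; ring1)

theorem tail_subdiag (α : ℝ) (n : ℕ) :
    Fin.tail (fun i : Fin (n + 1) => subdiag α (n + 1) i) =
      fun i : Fin n => subdiag (α + 1) n i := by
  funext i
  simp only [Fin.tail, Fin.val_succ, subdiag]
  split_ifs <;> first | omega | (push_cast; ring1)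

theorem tail_diag (lam α : ℝ) (n : ℕ) :
    Fin.tail (fun i : Fin (n + 1) => diag lam α (n + 1) i) =
      fun i : Fin n => diag lam (α + 1) n i := by
  funext i
  simp only [Fin.tail, Fin.val_succ, diag]
  split_ifs <;> first | omega | (push_cast; ring1)

theorem prod_diag (lam α : ℝ) (n : ℕ) :
    ∏ i : Fin (n + 1), diag lam α (n + 1) i = (∏ l ∈ range n, (lam + l + 2 + α)) * (lam - 1) := by
  rw [Fin.prod_univ_castSucc, ← Fin.prod_univ_eq_prod_range]
  congr 1
  · exact prod_congr rfl fun i _ => by simp [diag, i.isLt.ne]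
  · simp [diag]

theorem topRow_zero (α : ℝ) {n : ℕ} (hn : n ≠ 0) : topRow α n 0 = -(1 + α) := by
  simp [topRow, hn.symm, add_comm]

theorem subdiag_zero (α : ℝ) {n : ℕ} (hn : n ≠ 1) : subdiag α n 0 = -(1 + α) := by
  simp [subdiag, hn.symm, add_comm]

theorem prod_range_succ_shift (lam α : ℝ) (n : ℕ) :
    ∏ l ∈ range (n + 1), (lam + l + 1 + α) =
      (∏ l ∈ range n, (lam + l + 2 + α)) * (lam + 1 + α) := by
  rw [prod_range_succ']
  exact congrArg₂ _ (prod_congr rfl fun l _ => by push_cast; ring) (by simp)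

theorem prod_Icc_one_eq_prod_range (lam α : ℝ) (n : ℕ) :
    ∏ l ∈ Icc 1 n, (lam + l + α) = ∏ l ∈ range n, (lam + l + 1 + α) := by
  rw [← Ico_add_one_right_eq_Icc, prod_Ico_eq_prod_range]
  exact prod_congr (by simp) fun l _ => by push_cast; ring

theorem det_reducedCharMatrix (lam : ℝ) {n : ℕ} (hn : 1 ≤ n) (α : ℝ) :
    (reducedCharMatrix lam α n).det = -(1 + α) * ∏ l ∈ range n, (lam + l + 1 + α) := by
  induction n, hn using Nat.le_induction generalizing α with
  | base =>
    rw [reducedCharMatrix, det_lowerBidiagonalWithTopRow_succ,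
      det_lowerBidiagonalWithTopRow_zero]
    simp [topRow, subdiag, diag, Fin.tail]
    ring
  | succ n hn ih =>
    have hshift : ∏ l ∈ range n, (lam + l + 1 + (α + 1)) = ∏ l ∈ range n, (lam + l + 2 + α) :=
      prod_congr rfl fun l _ => by ring
    rw [reducedCharMatrix, det_lowerBidiagonalWithTopRow_succ, tail_topRow, tail_subdiag,
      tail_diag, ← reducedCharMatrix, ih, prod_diag, hshift, prod_range_succ_shift, Fin.val_zero,
      topRow_zero α (by omega), Fin.val_zero, subdiag_zero α (by omega)]
    ring

theorem sub_transferMatrix_eq (lam α : ℝ) (κ : ℕ) :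
    lam • (1 : Matrix (Fin (κ + 1)) (Fin (κ + 1)) ℝ) - PATransferMatrix α κ =
      lowerBidiagonalWithTopRow (Function.update (fun j : Fin (κ + 1) => topRow α κ j) 0 lam)
        (fun i : Fin κ => subdiag α κ i) (fun i : Fin κ => diag lam α κ i) := by
  ext i j
  have hj := j.isLt
  cases i using Fin.cases with
  | zero =>
    simp only [Matrix.sub_apply, Matrix.smul_apply, one_apply, smul_eq_mul, PATransferMatrix,
      of_apply, lowerBidiagonalWithTopRow_apply_zero, Function.update_apply, topRow, Fin.ext_iff,
      Fin.val_zero]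
    split_ifs <;> first | omega | (push_cast; ring1)
  | succ i =>
    have hi := i.isLt
    simp only [Matrix.sub_apply, Matrix.smul_apply, one_apply, smul_eq_mul, PATransferMatrix,
      of_apply, lowerBidiagonalWithTopRow_apply_succ, subdiag, diag, Fin.ext_iff, Fin.val_succ,
      Fin.val_castSucc]
    split_ifs <;>
      first | omega | (push_cast; ring1) | (rw [show (j : ℕ) = i by omega]; push_cast; ring1)

theorem det_sub_transferMatrix (lam α : ℝ) {κ : ℕ} (hκ : 2 ≤ κ) :
    (lam • (1 : Matrix (Fin (κ + 1)) (Fin (κ + 1)) ℝ) - PATransferMatrix α κ).det =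
      (lam - (2 + α)) * ∏ l ∈ Icc 1 κ, (lam + l + α) := by
  obtain ⟨n, rfl⟩ : ∃ n, κ = n + 1 := ⟨κ - 1, by omega⟩
  rw [sub_transferMatrix_eq, det_lowerBidiagonalWithTopRow_update_zero, ← reducedCharMatrix,
    det_reducedCharMatrix lam (by omega), prod_diag, Fin.val_zero, topRow_zero α (by omega),
    prod_Icc_one_eq_prod_range, prod_range_succ_shift]
  ring

theorem det_sub_transferMatrix_eq_zero_iff (μ α : ℝ) {κ : ℕ} (hκ : 2 ≤ κ) :
    (μ • (1 : Matrix (Fin (κ + 1)) (Fin (κ + 1)) ℝ) - PATransferMatrix α κ).det = 0 ↔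
      μ = 2 + α ∨ ∃ l : ℕ, 1 ≤ l ∧ l ≤ κ ∧ μ = -((l : ℝ) + α) := by
  rw [det_sub_transferMatrix μ α hκ, mul_eq_zero, sub_eq_zero, prod_eq_zero_iff]
  simp only [mem_Icc, and_assoc, add_assoc, add_eq_zero_iff_eq_neg]

end PATransferMatrix

/-- For `α > −1` and `κ ≥ 2`, the characteristic polynomial of `A_κ`
satisfies `det(λI − A_κ) = (λ − (2+α)) ∏_{l=1}^κ (λ + l + α)`. In particular `2 + α`
is the unique positive eigenvalue of `A_κ`, and all other eigenvalues are the real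
numbers `−(l+α)`, `l = 1, …, κ`. -/
theorem stmt_18 (α : ℝ) (hα : -1 < α) (κ : ℕ) (hκ : 2 ≤ κ) :
    (∀ lam : ℝ,
      (lam • (1 : Matrix (Fin (κ + 1)) (Fin (κ + 1)) ℝ) - PATransferMatrix α κ).det
        = (lam - (2 + α)) * ∏ l ∈ Finset.Icc 1 κ, (lam + (l : ℝ) + α)) ∧
    (∀ μ : ℝ,
      (μ • (1 : Matrix (Fin (κ + 1)) (Fin (κ + 1)) ℝ) - PATransferMatrix α κ).det = 0
        ↔ (μ = 2 + α ∨ ∃ l : ℕ, 1 ≤ l ∧ l ≤ κ ∧ μ = -((l : ℝ) + α))) ∧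
    (∀ μ : ℝ, 0 < μ →
      ((μ • (1 : Matrix (Fin (κ + 1)) (Fin (κ + 1)) ℝ) - PATransferMatrix α κ).det = 0
        ↔ μ = 2 + α)) := by
  have hroots := fun μ => PATransferMatrix.det_sub_transferMatrix_eq_zero_iff μ α hκ
  refine ⟨fun lam => PATransferMatrix.det_sub_transferMatrix lam α hκ, hroots, fun μ hμ => ?_⟩
  rw [hroots]
  refine ⟨?_, Or.inl⟩
  rintro (h | ⟨l, hl, -, rfl⟩)
  · exact h
  · have : (1 : ℝ) ≤ l := by exact_mod_cast hl
    linarith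
end
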